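/- Let k ≤ ⌊(d−1)/2⌋ and suppose φ ∈ S_d^* satisfies φ(L_1^{n_1} ⋯ L_r^{n_r} · h) = 0 for all h ∈ S_{d−k−1}, where L_1,...,L_r are pairwise non-proportional linear forms, Σ n_i = k+1, and n_1 ≥ 2. If additionally φ is a linear combination of d−k evaluation functionals φ = Σ_{j=1}^{d−k} λ_j ev(α_j), then φ is a linear combination of the evaluations at the zeros of those L_i whose zero classes occur among the [α_j]. In particular, if moreover φ does not vanish on L_1 ⋯ L_s · S_{d−s} for any s ≤ k with any choice of s of the forms L_i, then no such decomposition into d−k evaluations exists. -/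

import Mathlib

/-!
Grouping the points `αⱼ` by their classes in `ℙ¹` writes `φ = ∑ₚ Cₚ ev(p)` over at most `d - k`
distinct points. Pairing `φ` with `M h`, `M = ∏ Lᵢ^{nᵢ}`, gives `∑ₚ Cₚ M(p) h(p) = 0` for every
form `h` of degree `d - k - 1`. At most `D + 1` distinct points of `ℙ¹` impose independent
conditions on forms of degree `D` (a product of linear forms vanishes at all of them but one), so
`Cₚ M(p) = 0`: every point that carries weight is a zero of some `Lᵢ`, i.e. the class of `βᵢ`.
Since `n₁ ≥ 2` and `∑ nᵢ = k + 1`, at most `k` of the `Lᵢ` occur, and `φ` kills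
`∏ Lᵢ · S_{d-s}` for the `s ≤ k` forms that carry it.
-/

open MvPolynomial Finset

noncomputable section

def linForm (K : Type) [Field K] (c : Fin 2 → K) : MvPolynomial (Fin 2) K :=
  C (c 0) * X 0 + C (c 1) * X 1

/-- `α` is not a scalar multiple of `β` (for nonzero vectors: distinct points of `ℙ¹`). -/
def NonProp (K : Type) [Field K] (α β : Fin 2 → K) : Prop := ∀ t : K, α ≠ t • β

/-- The Waring rank of a binary form: the least `r` such that `q` is a sum of `r`
`d`-th powers of linear forms. -/
def waringRank (K : Type) [Field K] (d : ℕ) (q : MvPolynomial (Fin 2) K) : ℕ :=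
  sInf {r : ℕ | ∃ L : Fin r → Fin 2 → K, q = ∑ i, linForm K (L i) ^ d}

open scoped LinearAlgebra.Projectivization

theorem MvPolynomial.IsHomogeneous.eval_smul {R σ : Type*} [CommSemiring R] {m : ℕ}
    {f : MvPolynomial σ R} (hf : f.IsHomogeneous m) (t : R) (x : σ → R) :
    eval (t • x) f = t ^ m * eval x f := by
  rw [f.as_sum, map_sum, map_sum, mul_sum]
  refine sum_congr rfl fun s hs => ?_
  have hdeg : s.degree = m := by
    rw [Finsupp.degree_eq_weight_one]
    exact hf (mem_support_iff.mp hs)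
  simp only [eval_monomial, Pi.smul_apply, smul_eq_mul, mul_pow, Finsupp.prod_mul]
  rw [Finsupp.prod, Finsupp.prod, prod_pow_eq_pow_sum, ← Finsupp.degree_apply, hdeg]
  ring

theorem sum_mul_eval_eq_sum_fiberwise {R σ ι κ : Type*} [CommSemiring R] [DecidableEq κ] {d : ℕ}
    {f : MvPolynomial σ R} (hf : f.IsHomogeneous d) {s : Finset ι} {u : Finset κ} {g : ι → κ}
    (hg : ∀ j ∈ s, g j ∈ u) (lam t : ι → R) {α : ι → σ → R} {β : κ → σ → R}
    (hαβ : ∀ j ∈ s, α j = t j • β (g j)) :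
    ∑ j ∈ s, lam j * eval (α j) f =
      ∑ i ∈ u, (∑ j ∈ s with g j = i, lam j * t j ^ d) * eval (β i) f := by
  rw [← sum_fiberwise_of_maps_to hg]
  refine sum_congr rfl fun i _ => ?_
  rw [sum_mul]
  refine sum_congr rfl fun j hj => ?_
  obtain ⟨hjs, rfl⟩ := mem_filter.mp hj
  rw [hαβ j hjs, hf.eval_smul]
  ring

variable {K : Type} [Field K]

theorem eval_linForm (c x : Fin 2 → K) : eval x (linForm K c) = c 0 * x 0 + c 1 * x 1 := by
  simp [linForm]

theorem isHomogeneous_linForm (c : Fin 2 → K) : (linForm K c).IsHomogeneous 1 :=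
  (isHomogeneous_C_mul_X (c 0) 0).add (isHomogeneous_C_mul_X (c 1) 1)

theorem exists_eq_smul_of_mul_eq_mul {x y : Fin 2 → K} (hy : y ≠ 0)
    (h : x 0 * y 1 = x 1 * y 0) : ∃ t : K, x = t • y := by
  obtain ⟨i, hi⟩ := Function.ne_iff.mp hy
  have hcross : ∀ i j, x j * y i = x i * y j := by
    simp only [Fin.forall_fin_two]
    exact ⟨⟨trivial, h.symm⟩, h, trivial⟩
  refine ⟨x i / y i, funext fun j => ?_⟩
  rw [Pi.smul_apply, smul_eq_mul, div_mul_eq_mul_div, eq_div_iff hi, hcross]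

theorem exists_eq_smul_of_eval_linForm_eq_zero {c x y : Fin 2 → K} (hc : c ≠ 0) (hy : y ≠ 0)
    (hx : eval x (linForm K c) = 0) (hy' : eval y (linForm K c) = 0) : ∃ t : K, x = t • y := by
  rw [eval_linForm] at hx hy'
  have hcross : ∀ i, (x 0 * y 1 - x 1 * y 0) * c i = 0 := by
    refine Fin.forall_fin_two.mpr ⟨?_, ?_⟩
    · linear_combination y 1 * hx - x 1 * hy'
    · linear_combination x 0 * hy' - y 0 * hx
  obtain ⟨i, hi⟩ := Function.ne_iff.mp hc
  exact exists_eq_smul_of_mul_eq_mul hy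
    (sub_eq_zero.mp ((mul_eq_zero.mp (hcross i)).resolve_right hi))

def linFormVanishingAt (v : Fin 2 → K) : MvPolynomial (Fin 2) K := linForm K ![v 1, -v 0]

theorem eval_linFormVanishingAt (v x : Fin 2 → K) :
    eval x (linFormVanishingAt v) = v 1 * x 0 - v 0 * x 1 := by
  simp [linFormVanishingAt, eval_linForm, sub_eq_add_neg]

theorem eval_linFormVanishingAt_self (v : Fin 2 → K) : eval v (linFormVanishingAt v) = 0 := by
  rw [eval_linFormVanishingAt]; ring

theorem exists_eq_smul_of_eval_linFormVanishingAt_eq_zero {v x : Fin 2 → K} (hv : v ≠ 0)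
    (hx : eval x (linFormVanishingAt v) = 0) : ∃ t : K, x = t • v := by
  rw [eval_linFormVanishingAt] at hx
  exact exists_eq_smul_of_mul_eq_mul hv (by linear_combination hx)

theorem isHomogeneous_linFormVanishingAt (v : Fin 2 → K) :
    (linFormVanishingAt v).IsHomogeneous 1 :=
  isHomogeneous_linForm _

theorem eq_zero_of_forall_sum_mul_eval_rep_eq_zero {D : ℕ} {S : Finset (ℙ K (Fin 2 → K))}
    (hS : #S ≤ D + 1) (C : ℙ K (Fin 2 → K) → K)
    (hC : ∀ f : MvPolynomial (Fin 2) K, f.IsHomogeneous D → ∑ p ∈ S, C p * eval p.rep f = 0) :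
    ∀ p ∈ S, C p = 0 := by
  classical
  intro p hp
  obtain ⟨i, hi⟩ := Function.ne_iff.mp p.rep_nonzero
  set f := (∏ q ∈ S.erase p, linFormVanishingAt q.rep) * X i ^ (D + 1 - #S)
  have hf : f.IsHomogeneous D := by
    have hdeg := (IsHomogeneous.prod (S.erase p) _ (fun _ => 1)
      fun q _ => isHomogeneous_linFormVanishingAt q.rep).mul (isHomogeneous_X_pow i (D + 1 - #S))
    have hcard := card_erase_of_mem hp
    have hpos := card_pos.mpr ⟨p, hp⟩
    convert hdeg using 1
    simp only [sum_const, smul_eq_mul, mul_one, hcard]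
    omega
  have hfp : eval p.rep f ≠ 0 := by
    simp only [f, map_mul, map_prod, map_pow, eval_X]
    refine mul_ne_zero (prod_ne_zero_iff.mpr fun q hq h0 => ne_of_mem_erase hq ?_)
      (pow_ne_zero _ hi)
    obtain ⟨t, ht⟩ := exists_eq_smul_of_eval_linFormVanishingAt_eq_zero q.rep_nonzero h0
    rw [← p.mk_rep, ← q.mk_rep, eq_comm, Projectivization.mk_eq_mk_iff']
    exact ⟨t, ht.symm⟩
  have hfq : ∀ q ∈ S, q ≠ p → C q * eval q.rep f = 0 := fun q hq hqp => by
    simp only [f, map_mul, map_prod]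
    rw [prod_eq_zero (mem_erase.mpr ⟨hqp, hq⟩) (eval_linFormVanishingAt_self q.rep), zero_mul,
      mul_zero]
  have hsum := hC f hf
  rw [sum_eq_single_of_mem p hp hfq] at hsum
  exact (mul_eq_zero.mp hsum).resolve_right hfp

theorem exists_sum_mul_eval_rep_of_forall_mul_eq_zero {ι : Type*} [Fintype ι] {d m : ℕ}
    (φ : Module.Dual K (MvPolynomial (Fin 2) K)) {M : MvPolynomial (Fin 2) K}
    (hM : M.IsHomogeneous m)
    (hvan : ∀ h : MvPolynomial (Fin 2) K, h.IsHomogeneous (d - m) → φ (M * h) = 0)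
    (hcard : Fintype.card ι ≤ d + 1 - m) (lam : ι → K) (α : ι → Fin 2 → K) (hα : ∀ j, α j ≠ 0)
    (hφ : ∀ f : MvPolynomial (Fin 2) K, f.IsHomogeneous d → φ f = ∑ j, lam j * eval (α j) f) :
    ∃ (S : Finset (ℙ K (Fin 2 → K))) (C : ℙ K (Fin 2 → K) → K),
      (∀ p ∈ S, (∃ j, Projectivization.mk K (α j) (hα j) = p) ∧ eval p.rep M = 0) ∧
      ∀ f : MvPolynomial (Fin 2) K, f.IsHomogeneous d → φ f = ∑ p ∈ S, C p * eval p.rep f := by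
  classical
  set cls : ι → ℙ K (Fin 2 → K) := fun j => Projectivization.mk K (α j) (hα j)
  have hrep : ∀ j, ∃ t : K, α j = t • (cls j).rep := fun j => by
    obtain ⟨a, ha⟩ := Projectivization.exists_smul_eq_mk_rep K (α j) (hα j)
    exact ⟨(a⁻¹ : Kˣ), by rw [← ha]; simp [Units.smul_def, smul_smul]⟩
  choose t ht using hrep
  set P := univ.image cls
  set C : ℙ K (Fin 2 → K) → K := fun p => ∑ j with cls j = p, lam j * t j ^ d
  have hφP : ∀ f : MvPolynomial (Fin 2) K, f.IsHomogeneous d →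
      φ f = ∑ p ∈ P, C p * eval p.rep f := fun f hf => by
    rw [hφ f hf]
    exact sum_mul_eval_eq_sum_fiberwise hf (fun j _ => mem_image_of_mem cls (mem_univ j)) lam t
      fun j _ => ht j
  have hCM : ∀ p ∈ P, C p * eval p.rep M = 0 := by
    intro p hp
    have hmd : m ≤ d := by
      have : 0 < d + 1 - m :=
        (card_pos.mpr ⟨p, hp⟩).trans_le (card_image_le.trans (card_univ.trans_le hcard))
      omega
    refine eq_zero_of_forall_sum_mul_eval_rep_eq_zero (D := d - m) ?_
      (fun p => C p * eval p.rep M) (fun h hh => ?_) p hp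
    · have : #P ≤ d + 1 - m := card_image_le.trans (card_univ.trans_le hcard)
      omega
    · have hMh : (M * h).IsHomogeneous d := by simpa [hmd] using hM.mul hh
      simp_rw [mul_assoc, ← eval_mul]
      rw [← hφP _ hMh, hvan h hh]
  refine ⟨P.filter fun p => eval p.rep M = 0, C, fun p hp => ?_, fun f hf => ?_⟩
  · obtain ⟨hpP, hpM⟩ := mem_filter.mp hp
    obtain ⟨j, -, rfl⟩ := mem_image.mp hpP
    exact ⟨⟨j, rfl⟩, hpM⟩
  · rw [hφP f hf, sum_filter_of_ne fun p hp hne =>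
      (mul_eq_zero.mp (hCM p hp)).resolve_left (left_ne_zero_of_mul hne)]

theorem exists_ne_zero_eq_smul_of_eval_prod_eq_zero {ι : Type*} [Fintype ι]
    {c β : ι → Fin 2 → K} (n : ι → ℕ) (hc : ∀ i, c i ≠ 0) (hβ : ∀ i, β i ≠ 0)
    (hβz : ∀ i, eval (β i) (linForm K (c i)) = 0) {x : Fin 2 → K}
    (hx : eval x (∏ i, linForm K (c i) ^ n i) = 0) : ∃ i, n i ≠ 0 ∧ ∃ t : K, x = t • β i := by
  simp only [map_prod, map_pow] at hx
  obtain ⟨i, -, hi⟩ := prod_eq_zero_iff.mp hx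
  obtain ⟨hxi, hni⟩ := pow_eq_zero_iff'.mp hi
  exact ⟨i, hni, exists_eq_smul_of_eval_linForm_eq_zero (hc i) (hβ i) hxi (hβz i)⟩

theorem exists_sum_mul_eval_of_forall_prod_mul_eq_zero {ι κ : Type*} [Fintype ι] [Fintype κ]
    {d m : ℕ} (φ : Module.Dual K (MvPolynomial (Fin 2) K)) {c β : κ → Fin 2 → K} {n : κ → ℕ}
    (hc : ∀ i, c i ≠ 0) (hβ : ∀ i, β i ≠ 0) (hβz : ∀ i, eval (β i) (linForm K (c i)) = 0)
    (hn : ∑ i, n i = m)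
    (hvan : ∀ h : MvPolynomial (Fin 2) K, h.IsHomogeneous (d - m) →
      φ ((∏ i, linForm K (c i) ^ n i) * h) = 0)
    (hcard : Fintype.card ι ≤ d + 1 - m) (lam : ι → K) (α : ι → Fin 2 → K) (hα : ∀ j, α j ≠ 0)
    (hφ : ∀ f : MvPolynomial (Fin 2) K, f.IsHomogeneous d → φ f = ∑ j, lam j * eval (α j) f) :
    ∃ μ : κ → K, (∀ i, μ i ≠ 0 → n i ≠ 0 ∧ ∃ (j : ι) (t : K), α j = t • β i) ∧
      ∀ f : MvPolynomial (Fin 2) K, f.IsHomogeneous d → φ f = ∑ i, μ i * eval (β i) f := by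
  classical
  have hM : (∏ i, linForm K (c i) ^ n i).IsHomogeneous m := by
    simpa [hn] using IsHomogeneous.prod univ _ n fun i _ => by
      simpa using (isHomogeneous_linForm (c i)).pow (n i)
  obtain ⟨S, C, hS, hφS⟩ :=
    exists_sum_mul_eval_rep_of_forall_mul_eq_zero φ hM hvan hcard lam α hα hφ
  have hzero : ∀ p ∈ S, ∃ i, n i ≠ 0 ∧ ∃ t : K, p.rep = t • β i := fun p hp =>
    exists_ne_zero_eq_smul_of_eval_prod_eq_zero n hc hβ hβz (hS p hp).2
  choose g hgn t ht using hzero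
  refine ⟨fun i => ∑ p ∈ S.attach with g p.1 p.2 = i, C p * t p.1 p.2 ^ d, fun i hi => ?_,
    fun f hf => ?_⟩
  · obtain ⟨⟨p, hpS⟩, hp, -⟩ := exists_ne_zero_of_sum_ne_zero hi
    obtain rfl := (mem_filter.mp hp).2
    obtain ⟨j, hj⟩ := (hS p hpS).1
    rw [← p.mk_rep, Projectivization.mk_eq_mk_iff'] at hj
    obtain ⟨a, ha⟩ := hj
    exact ⟨hgn p hpS, j, a * t p hpS, by rw [← ha, ht p hpS, smul_smul]⟩
  · rw [hφS f hf, ← sum_attach S]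
    exact sum_mul_eval_eq_sum_fiberwise hf (fun p _ => mem_univ _) (fun p : S => C p)
      (fun p : S => t p.1 p.2) fun p _ => ht p.1 p.2

theorem map_prod_linForm_mul_eq_zero {ι : Type*} [Fintype ι] {d s : ℕ} (hsd : s ≤ d)
    (φ : Module.Dual K (MvPolynomial (Fin 2) K)) {c β : ι → Fin 2 → K} {μ : ι → K}
    (hβz : ∀ i, eval (β i) (linForm K (c i)) = 0)
    (hφ : ∀ f : MvPolynomial (Fin 2) K, f.IsHomogeneous d → φ f = ∑ i, μ i * eval (β i) f)
    {e : Fin s → ι} (he : ∀ i, μ i ≠ 0 → i ∈ Set.range e) {h : MvPolynomial (Fin 2) K}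
    (hh : h.IsHomogeneous (d - s)) : φ ((∏ t, linForm K (c (e t))) * h) = 0 := by
  have hdeg : ((∏ t, linForm K (c (e t))) * h).IsHomogeneous d := by
    simpa [hsd] using (IsHomogeneous.prod univ _ (fun _ => 1)
      fun t _ => isHomogeneous_linForm (c (e t))).mul hh
  rw [hφ _ hdeg]
  refine sum_eq_zero fun i _ => ?_
  by_cases hμ : μ i = 0
  · rw [hμ, zero_mul]
  · obtain ⟨t, rfl⟩ := he i hμ
    rw [map_mul, map_prod, prod_eq_zero (mem_univ t) (hβz _), zero_mul, mul_zero]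

theorem card_filter_ne_zero_lt_sum {ι : Type*} (s : Finset ι) (n : ι → ℕ) {i₀ : ι}
    (hi₀ : i₀ ∈ s) (h2 : 2 ≤ n i₀) : #{i ∈ s | n i ≠ 0} < ∑ i ∈ s, n i := by
  rw [card_filter]
  refine sum_lt_sum (fun i _ => ?_) ⟨i₀, hi₀, ?_⟩ <;> split_ifs <;> omega

theorem stmt9_general (K : Type) [Field K] (d k r : ℕ)
    (hr : 0 < r)
    (φ : Module.Dual K (MvPolynomial (Fin 2) K))
    (c : Fin r → Fin 2 → K) (n : Fin r → ℕ) (β : Fin r → Fin 2 → K)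
    (hc : ∀ i, c i ≠ 0)
    (hn : ∑ i, n i = k + 1) (hn1 : 2 ≤ n ⟨0, hr⟩)
    (hβ : ∀ i, β i ≠ 0) (hβz : ∀ i, eval (β i) (linForm K (c i)) = 0)
    (hvan : ∀ h : MvPolynomial (Fin 2) K, h.IsHomogeneous (d - k - 1) →
      φ ((∏ i, linForm K (c i) ^ n i) * h) = 0) :
    (∀ (lam : Fin (d - k) → K) (α : Fin (d - k) → Fin 2 → K), (∀ j, α j ≠ 0) →
      (∀ f : MvPolynomial (Fin 2) K, f.IsHomogeneous d →
        φ f = ∑ j, lam j * eval (α j) f) →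
      ∃ μ : Fin r → K,
        (∀ i, ¬ (∃ (j : Fin (d - k)) (t : K), α j = t • β i) → μ i = 0) ∧
        ∀ f : MvPolynomial (Fin 2) K, f.IsHomogeneous d →
          φ f = ∑ i, μ i * eval (β i) f) ∧
    ((∀ (s : ℕ), s ≤ k → ∀ e : Fin s ↪ Fin r,
        ∃ h : MvPolynomial (Fin 2) K, h.IsHomogeneous (d - s) ∧
          φ ((∏ t, linForm K (c (e t))) * h) ≠ 0) →
      ¬ ∃ (lam : Fin (d - k) → K) (α : Fin (d - k) → Fin 2 → K),
          (∀ j, α j ≠ 0) ∧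
          ∀ f : MvPolynomial (Fin 2) K, f.IsHomogeneous d →
            φ f = ∑ j, lam j * eval (α j) f) := by
  classical
  have key := exists_sum_mul_eval_of_forall_prod_mul_eq_zero (ι := Fin (d - k)) φ hc hβ hβz hn
    (by simpa only [Nat.sub_sub] using hvan) (by simp)
  refine ⟨fun lam α hα hφ => ?_, fun hcond ⟨lam, α, hα, hφ⟩ => ?_⟩
  · obtain ⟨μ, hμ, hφμ⟩ := key lam α hα hφ
    exact ⟨μ, fun i hi => not_not.mp fun hμi => hi (hμ i hμi).2, hφμ⟩
  · obtain ⟨μ, hμ, hφμ⟩ := key lam α hα hφ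
    set T : Finset (Fin r) := {i | μ i ≠ 0}
    have hTk : #T ≤ k := by
      have hTn : T ⊆ ({i | n i ≠ 0} : Finset (Fin r)) :=
        monotone_filter_right univ fun i _ hi => (hμ i hi).1
      have := (card_le_card hTn).trans_lt (card_filter_ne_zero_lt_sum univ n (mem_univ _) hn1)
      omega
    have hTd : #T ≤ d := by
      rcases T.eq_empty_or_nonempty with hT | ⟨i, hi⟩
      · simp [hT]
      · obtain ⟨-, j, -⟩ := hμ i (mem_filter.mp hi).2
        have := j.isLt
        omega
    obtain ⟨h, hh, hne⟩ := hcond #T hTk (T.orderEmbOfFin rfl).toEmbedding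
    refine hne (map_prod_linForm_mul_eq_zero hTd φ hβz hφμ (fun i hi => ?_) hh)
    simpa [range_orderEmbOfFin, T] using hi

/-- Proposition 7 (`ida`): if `φ` kills `L₁^{n₁}⋯L_r^{n_r}·S_{d-k-1}` with `Σnᵢ = k+1`,
`n₁ ≥ 2`, and `φ = Σ λⱼ ev(αⱼ)` with `d-k` terms, then `φ` is a combination of the
evaluations at the zeros `βᵢ` of those `Lᵢ` whose classes occur among the `[αⱼ]`; and if
moreover `φ` does not vanish on `L_{i₁}⋯L_{i_s}·S_{d-s}` for any choice of `s ≤ k` of the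
forms, then no decomposition into `d-k` evaluations exists. -/
theorem stmt9 (K : Type) [Field K] [IsAlgClosed K] [CharZero K] (d k r : ℕ)
    (hk : k ≤ (d - 1) / 2) (hr : 0 < r)
    (φ : Module.Dual K (MvPolynomial (Fin 2) K))
    (c : Fin r → Fin 2 → K) (n : Fin r → ℕ) (β : Fin r → Fin 2 → K)
    (hc : ∀ i, c i ≠ 0) (hnp : ∀ i j, i ≠ j → NonProp K (c i) (c j))
    (hn : ∑ i, n i = k + 1) (hn1 : 2 ≤ n ⟨0, hr⟩)
    (hβ : ∀ i, β i ≠ 0) (hβz : ∀ i, eval (β i) (linForm K (c i)) = 0)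
    (hvan : ∀ h : MvPolynomial (Fin 2) K, h.IsHomogeneous (d - k - 1) →
      φ ((∏ i, linForm K (c i) ^ n i) * h) = 0) :
    (∀ (lam : Fin (d - k) → K) (α : Fin (d - k) → Fin 2 → K), (∀ j, α j ≠ 0) →
      (∀ f : MvPolynomial (Fin 2) K, f.IsHomogeneous d →
        φ f = ∑ j, lam j * eval (α j) f) →
      ∃ μ : Fin r → K,
        (∀ i, ¬ (∃ (j : Fin (d - k)) (t : K), α j = t • β i) → μ i = 0) ∧
        ∀ f : MvPolynomial (Fin 2) K, f.IsHomogeneous d →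
          φ f = ∑ i, μ i * eval (β i) f) ∧
    ((∀ (s : ℕ), s ≤ k → ∀ e : Fin s ↪ Fin r,
        ∃ h : MvPolynomial (Fin 2) K, h.IsHomogeneous (d - s) ∧
          φ ((∏ t, linForm K (c (e t))) * h) ≠ 0) →
      ¬ ∃ (lam : Fin (d - k) → K) (α : Fin (d - k) → Fin 2 → K),
          (∀ j, α j ≠ 0) ∧
          ∀ f : MvPolynomial (Fin 2) K, f.IsHomogeneous d →
            φ f = ∑ j, lam j * eval (α j) f) :=
  stmt9_general K d k r hr φ c n β hc hn hn1 hβ hβz hvan
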